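/- arXiv:2103.09332 — 3 statements merged into one kernel-verified Lean document; each statement's English description precedes it below -/
import Mathlib

section
/- Let p < q be real numbers, let μ be a finite Borel measure on ℝ with μ((p,q)) = 0, let α ∈ ℝ and β ≥ 0. For x ∈ (p,q) define φ(x) = α + β x + ∫_ℝ (1 + λ x)/(λ − x) dμ(λ) and D(x) = β + ∫_ℝ (1 + λ²)/(λ − x)² dμ(λ). Then for all s, t with p < s < t < q: φ(t) − φ(s) ≤ √(D(t) · D(s)) · (t − s). -/
open Filter Topology MeasureTheory

/-- Jocić's inequality for functions given by the Nevanlinna representation on an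
interval `(p,q)` charged with no mass: with
`φ(x) = α + βx + ∫ (1+λx)/(λ-x) dμ(λ)` and `D(x) = β + ∫ (1+λ²)/(λ-x)² dμ(λ)`,
one has `φ(t) - φ(s) ≤ √(D(t)·D(s))·(t-s)` for `p < s < t < q`. -/
theorem jocic_ineq_nevanlinna_interval
    (p q : ℝ) (hpq : p < q)
    (μ : Measure ℝ) [IsFiniteMeasure μ] (hμ : μ (Set.Ioo p q) = 0)
    (α β : ℝ) (hβ : 0 ≤ β)
    (φ D : ℝ → ℝ)
    (hφ : ∀ x ∈ Set.Ioo p q, φ x = α + β * x + ∫ l, (1 + l * x) / (l - x) ∂μ)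
    (hD : ∀ x ∈ Set.Ioo p q, D x = β + ∫ l, (1 + l ^ 2) / (l - x) ^ 2 ∂μ) :
    ∀ s t : ℝ, p < s → s < t → t < q →
      φ t - φ s ≤ Real.sqrt (D t * D s) * (t - s) := by
  intro s t hps hst htq
  have hs : s ∈ Set.Ioo p q := ⟨hps, hst.trans htq⟩
  have ht : t ∈ Set.Ioo p q := ⟨hps.trans hst, htq⟩
  -- a.e. λ lies outside (p,q)
  have hae : ∀ᵐ l ∂μ, l ≤ p ∨ q ≤ l := by
    have h0 : ∀ᵐ l ∂μ, l ∉ Set.Ioo p q := (ae_iff.2 (by simp only [not_not, Set.setOf_mem_eq]; exact hμ))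
    filter_upwards [h0] with l hl
    by_contra h
    push_neg at h
    exact hl ⟨h.1, h.2⟩
  -- distance bound
  have hdist : ∀ x ∈ Set.Ioo p q, ∀ l : ℝ, (l ≤ p ∨ q ≤ l) →
      min (x - p) (q - x) ≤ |l - x| := by
    rintro x hx l (hl | hl)
    · rw [abs_of_nonpos (by linarith [hx.1] : l - x ≤ 0)]
      exact le_trans (min_le_left _ _) (by linarith)
    · rw [abs_of_nonneg (by linarith [hx.2] : 0 ≤ l - x)]
      exact le_trans (min_le_right _ _) (by linarith)
  -- measurability helpers
  have meas_f : ∀ x : ℝ, Measurable (fun l : ℝ => (1 + l ^ 2) / (l - x) ^ 2) := by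
    intro x; exact ((measurable_const.add (measurable_id.pow_const 2)).div
      ((measurable_id.sub measurable_const).pow_const 2))
  have meas_g : ∀ x : ℝ, Measurable (fun l : ℝ => (1 + l * x) / (l - x)) := by
    intro x; exact ((measurable_const.add (measurable_id.mul_const x)).div
      (measurable_id.sub measurable_const))
  -- the f's are nonneg and bounded a.e., hence in every Lᵖ
  have hfnn : ∀ x l : ℝ, 0 ≤ (1 + l ^ 2) / (l - x) ^ 2 := by
    intro x l; positivity
  have hfbdd : ∀ x ∈ Set.Ioo p q, ∀ᵐ l ∂μ,
      ‖(1 + l ^ 2) / (l - x) ^ 2‖ ≤ (1 + 2 * x ^ 2) / (min (x - p) (q - x)) ^ 2 + 2 := by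
    intro x hx
    set d : ℝ := min (x - p) (q - x) with hd
    have hd0 : 0 < d := lt_min (by linarith [hx.1]) (by linarith [hx.2])
    filter_upwards [hae] with l hl
    have h1 : d ≤ |l - x| := hdist x hx l hl
    have h2 : d ^ 2 ≤ (l - x) ^ 2 := by
      calc d ^ 2 ≤ |l - x| ^ 2 := by nlinarith
        _ = (l - x) ^ 2 := sq_abs _
    rw [Real.norm_of_nonneg (hfnn x l)]
    rw [div_le_iff₀ (by nlinarith)]
    have hK : (0:ℝ) ≤ (1 + 2 * x ^ 2) / d ^ 2 := by positivity
    have hKd : (1 + 2 * x ^ 2) / d ^ 2 * d ^ 2 = 1 + 2 * x ^ 2 := by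
      field_simp
    nlinarith [mul_le_mul_of_nonneg_left h2 hK, sq_nonneg (l - x), sq_nonneg x,
      sq_nonneg (l - 2*x)]
  have hfint : ∀ x ∈ Set.Ioo p q, Integrable (fun l : ℝ => (1 + l ^ 2) / (l - x) ^ 2) μ :=
    fun x hx => ⟨(meas_f x).aestronglyMeasurable,
      HasFiniteIntegral.of_bounded (hfbdd x hx)⟩
  -- the g's are bounded a.e., hence integrable
  have hgint : ∀ x ∈ Set.Ioo p q, Integrable (fun l : ℝ => (1 + l * x) / (l - x)) μ := by
    intro x hx
    set d : ℝ := min (x - p) (q - x) with hd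
    have hd0 : 0 < d := lt_min (by linarith [hx.1]) (by linarith [hx.2])
    refine ⟨(meas_g x).aestronglyMeasurable,
      HasFiniteIntegral.of_bounded (C := |x| + (1 + x ^ 2) / d) ?_⟩
    filter_upwards [hae] with l hl
    have h1 : d ≤ |l - x| := hdist x hx l hl
    have hlx : l - x ≠ 0 := by
      intro h; rw [h, abs_zero] at h1; linarith
    have hid : (1 + l * x) / (l - x) = x + (1 + x ^ 2) / (l - x) := by
      field_simp; ring
    rw [Real.norm_eq_abs, hid]
    calc |x + (1 + x ^ 2) / (l - x)| ≤ |x| + |(1 + x ^ 2) / (l - x)| := abs_add_le _ _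
      _ = |x| + (1 + x ^ 2) / |l - x| := by rw [abs_div, abs_of_nonneg (by positivity : (0:ℝ) ≤ 1 + x ^ 2)]
      _ ≤ |x| + (1 + x ^ 2) / d := by
          gcongr
  -- the square-root functions
  set u : ℝ → ℝ := fun l => Real.sqrt ((1 + l ^ 2) / (l - t) ^ 2) with hu
  set v : ℝ → ℝ := fun l => Real.sqrt ((1 + l ^ 2) / (l - s) ^ 2) with hv
  have humeas : Measurable u := (meas_f t).sqrt
  have hvmeas : Measurable v := (meas_f s).sqrt
  have huL2 : MemLp u (ENNReal.ofReal 2) μ := by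
    refine MemLp.of_bound humeas.aestronglyMeasurable
      (Real.sqrt ((1 + 2 * t ^ 2) / (min (t - p) (q - t)) ^ 2 + 2)) ?_
    filter_upwards [hfbdd t ht] with l hl
    rw [Real.norm_of_nonneg (Real.sqrt_nonneg _)]
    exact Real.sqrt_le_sqrt (by rwa [Real.norm_of_nonneg (hfnn t l)] at hl)
  have hvL2 : MemLp v (ENNReal.ofReal 2) μ := by
    refine MemLp.of_bound hvmeas.aestronglyMeasurable
      (Real.sqrt ((1 + 2 * s ^ 2) / (min (s - p) (q - s)) ^ 2 + 2)) ?_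
    filter_upwards [hfbdd s hs] with l hl
    rw [Real.norm_of_nonneg (Real.sqrt_nonneg _)]
    exact Real.sqrt_le_sqrt (by rwa [Real.norm_of_nonneg (hfnn s l)] at hl)
  -- abbreviations for the D-integrals
  set It : ℝ := ∫ l, (1 + l ^ 2) / (l - t) ^ 2 ∂μ with hIt
  set Is : ℝ := ∫ l, (1 + l ^ 2) / (l - s) ^ 2 ∂μ with hIs
  have hItnn : 0 ≤ It := integral_nonneg (fun l => hfnn t l)
  have hIsnn : 0 ≤ Is := integral_nonneg (fun l => hfnn s l)
  -- Cauchy-Schwarz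
  have hconj : Real.HolderConjugate 2 2 := ⟨by norm_num, by norm_num, by norm_num⟩
  have hCS : ∫ l, u l * v l ∂μ ≤ Real.sqrt (It * Is) := by
    have h : ∫ l, u l * v l ∂μ ≤ (∫ l, u l ^ (2:ℝ) ∂μ) ^ (1/(2:ℝ)) * (∫ l, v l ^ (2:ℝ) ∂μ) ^ (1/(2:ℝ)) := integral_mul_le_Lp_mul_Lq_of_nonneg hconj
      (Eventually.of_forall (fun l => Real.sqrt_nonneg _))
      (Eventually.of_forall (fun l => Real.sqrt_nonneg _)) huL2 hvL2
    have hu2 : ∀ l, u l ^ (2:ℝ) = (1 + l ^ 2) / (l - t) ^ 2 := by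
      intro l
      rw [show ((2:ℝ) = ((2:ℕ):ℝ)) by norm_num, Real.rpow_natCast]
      exact Real.sq_sqrt (hfnn t l)
    have hv2 : ∀ l, v l ^ (2:ℝ) = (1 + l ^ 2) / (l - s) ^ 2 := by
      intro l
      rw [show ((2:ℝ) = ((2:ℕ):ℝ)) by norm_num, Real.rpow_natCast]
      exact Real.sq_sqrt (hfnn s l)
    simp only [hu2, hv2] at h
    calc ∫ l, u l * v l ∂μ ≤ It ^ (1/(2:ℝ)) * Is ^ (1/(2:ℝ)) := h
      _ = Real.sqrt It * Real.sqrt Is := by rw [Real.sqrt_eq_rpow, Real.sqrt_eq_rpow]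
      _ = Real.sqrt (It * Is) := (Real.sqrt_mul hItnn _).symm
  -- key identity: φ t - φ s = (t-s) * (β + ∫ u v)
  have hkey : φ t - φ s = (t - s) * (β + ∫ l, u l * v l ∂μ) := by
    rw [hφ t ht, hφ s hs]
    have hsub : (∫ l, (1 + l * t) / (l - t) ∂μ) - (∫ l, (1 + l * s) / (l - s) ∂μ)
        = ∫ l, ((1 + l * t) / (l - t) - (1 + l * s) / (l - s)) ∂μ :=
      (integral_sub (hgint t ht) (hgint s hs)).symm
    have hcongr : ∫ l, ((1 + l * t) / (l - t) - (1 + l * s) / (l - s)) ∂μ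
        = ∫ l, (t - s) * (u l * v l) ∂μ := by
      refine integral_congr_ae ?_
      filter_upwards [hae] with l hl
      have hlt : l - t ≠ 0 := by rcases hl with h | h <;> intro hc <;> nlinarith [ht.1, ht.2]
      have hls : l - s ≠ 0 := by rcases hl with h | h <;> intro hc <;> nlinarith [hs.1, hs.2]
      have hpos : 0 < (l - t) * (l - s) := by
        rcases hl with h | h
        · exact mul_pos_of_neg_of_neg (by linarith [ht.1]) (by linarith [hs.1])
        · exact mul_pos (by linarith [ht.2]) (by linarith [hs.2])
      have huv : u l * v l = (1 + l ^ 2) / ((l - t) * (l - s)) := by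
        rw [hu, hv]
        simp only
        rw [Real.sqrt_div (by positivity : (0:ℝ) ≤ 1 + l ^ 2),
          Real.sqrt_div (by positivity : (0:ℝ) ≤ 1 + l ^ 2),
          Real.sqrt_sq_eq_abs, Real.sqrt_sq_eq_abs]
        rw [div_mul_div_comm, Real.mul_self_sqrt (by positivity : (0:ℝ) ≤ 1 + l ^ 2),
          ← abs_mul, abs_of_pos hpos]
      rw [huv]
      field_simp
      ring
    have hmul : (∫ l, (t - s) * (u l * v l) ∂μ) = (t - s) * ∫ l, u l * v l ∂μ :=
      integral_const_mul _ _
    linear_combination hsub.trans (hcongr.trans hmul)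
  -- conclude
  rw [hkey, hD t ht, hD s hs, ← hIt, ← hIs, mul_comm (Real.sqrt _) (t - s)]
  have hts : 0 < t - s := by linarith
  refine mul_le_mul_of_nonneg_left ?_ hts.le
  -- β + ∫ uv ≤ √((β+It)(β+Is))
  calc β + ∫ l, u l * v l ∂μ ≤ β + Real.sqrt (It * Is) := by linarith [hCS]
    _ ≤ Real.sqrt ((β + It) * (β + Is)) := by
        rw [Real.le_sqrt (by positivity) (by positivity)]
        have h2 : 2 * (Real.sqrt It * Real.sqrt Is) ≤ It + Is := by
          nlinarith [sq_nonneg (Real.sqrt It - Real.sqrt Is), Real.sq_sqrt hItnn,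
            Real.sq_sqrt hIsnn]
        have hm : Real.sqrt It * Real.sqrt Is = Real.sqrt (It * Is) :=
          (Real.sqrt_mul hItnn _).symm
        nlinarith [Real.sq_sqrt (mul_nonneg hItnn hIsnn), Real.sqrt_nonneg (It * Is)]
end

section
/- Let X and Y be metric spaces, let f : X → Y be a mapping, let ω : X → ℝ and ω̃ : Y → ℝ be strictly positive functions, and let Ψ : X × X → ℝ be a nonnegative function such that Ψ(x,x) = ω̃(f(x))/ω(x) for every x ∈ X and liminf_{y → x, y ≠ x} Ψ(x,y) ≥ Ψ(x,x) for every x ∈ X. Then, as elements of [0,∞], ⨆_{x ∈ X} ( ω̃(f(x))/ω(x) ) · d*_f(x) ≤ ⨆_{x, y ∈ X, x ≠ y} Ψ(x,y) · dist(f(x), f(y)) / dist(x, y). -/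
open Filter Topology

/-- `d*_f(x)`: the limsup, in `[0,∞]`, of `dist (f x) (f y) / dist x y` as `y → x`,
`y ≠ x` (equal to `0` at isolated points). -/
noncomputable def upperScalingNumber {X Y : Type*} [MetricSpace X] [MetricSpace Y]
    (f : X → Y) (x : X) : ENNReal :=
  Filter.limsup (fun y => ENNReal.ofReal (dist (f x) (f y) / dist x y)) (𝓝[≠] x)

/-
Since `Ψ(x,x) ≤ liminf_{y→x} Ψ(x,y)` and `limsup u · liminf v ≤ limsup (u · v)` in `[0,∞]`,
`Ψ(x,x) · d*_f(x)` is at most the limsup of `Ψ(x,y) · dist(f x, f y) / dist(x,y)` as `y → x`,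
`y ≠ x`, and such a limsup is bounded by the supremum over all `y ≠ x`.
-/
theorem limsup_nhdsNE_le_iSup_ne {X α : Type*} [TopologicalSpace X] [CompleteLattice α]
    (g : X → α) (x : X) : limsup g (𝓝[≠] x) ≤ ⨆ y, ⨆ _ : x ≠ y, g y :=
  limsup_le_of_le (by isBoundedDefault) <| by
    filter_upwards [self_mem_nhdsWithin] with y (hy : y ≠ x)
    exact le_iSup₂_of_le (f := fun y (_ : x ≠ y) => g y) y hy.symm le_rfl

theorem ofReal_dist_div_dist {X Y : Type*} [MetricSpace X] [PseudoMetricSpace Y]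
    (f : X → Y) {x y : X} (hxy : x ≠ y) :
    ENNReal.ofReal (dist (f x) (f y) / dist x y) =
      ENNReal.ofReal (dist (f x) (f y)) / ENNReal.ofReal (dist x y) :=
  ENNReal.ofReal_div_of_pos (dist_pos.mpr hxy)

theorem blochNumber_le_lipschitzNumber_general
    {X Y : Type*} [MetricSpace X] [MetricSpace Y]
    (f : X → Y) (ω : X → ℝ) (ω' : Y → ℝ)
    (Ψ : X × X → ℝ)
    (hΨdiag : ∀ x : X, Ψ (x, x) = ω' (f x) / ω x)
    (hΨliminf : ∀ x : X,
      ENNReal.ofReal (Ψ (x, x)) ≤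
        Filter.liminf (fun y => ENNReal.ofReal (Ψ (x, y))) (𝓝[≠] x)) :
    (⨆ x : X, ENNReal.ofReal (ω' (f x) / ω x) * upperScalingNumber f x)
      ≤ ⨆ x : X, ⨆ y : X, ⨆ _ : x ≠ y,
          ENNReal.ofReal (Ψ (x, y)) *
            (ENNReal.ofReal (dist (f x) (f y)) / ENNReal.ofReal (dist x y)) := by
  refine iSup_le fun x => ?_
  set quotient : X → ENNReal := fun y => ENNReal.ofReal (dist (f x) (f y) / dist x y)
  set weight : X → ENNReal := fun y => ENNReal.ofReal (Ψ (x, y))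
  calc ENNReal.ofReal (ω' (f x) / ω x) * upperScalingNumber f x
      = limsup quotient (𝓝[≠] x) * weight x := by rw [← hΨdiag, mul_comm]; rfl
    _ ≤ limsup quotient (𝓝[≠] x) * liminf weight (𝓝[≠] x) := by gcongr; exact hΨliminf x
    _ ≤ limsup (quotient * weight) (𝓝[≠] x) := ENNReal.le_limsup_mul
    _ ≤ ⨆ y, ⨆ _ : x ≠ y, quotient y * weight y := limsup_nhdsNE_le_iSup_ne _ x
    _ ≤ _ := le_iSup_of_le x <| iSup₂_mono fun y hxy => by
      rw [mul_comm, ← ofReal_dist_div_dist f hxy]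

/-- The Bloch number is dominated by the Lipschitz number: for any admissible-type
function `Ψ` (symmetry and the fourth condition are not needed for this direction). -/
theorem blochNumber_le_lipschitzNumber
    {X Y : Type*} [MetricSpace X] [MetricSpace Y]
    (f : X → Y) (ω : X → ℝ) (ω' : Y → ℝ)
    (hω : ∀ x, 0 < ω x) (hω' : ∀ y, 0 < ω' y)
    (Ψ : X × X → ℝ) (hΨ0 : ∀ x y : X, 0 ≤ Ψ (x, y))
    (hΨdiag : ∀ x : X, Ψ (x, x) = ω' (f x) / ω x)
    (hΨliminf : ∀ x : X,
      ENNReal.ofReal (Ψ (x, x)) ≤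
        Filter.liminf (fun y => ENNReal.ofReal (Ψ (x, y))) (𝓝[≠] x)) :
    (⨆ x : X, ENNReal.ofReal (ω' (f x) / ω x) * upperScalingNumber f x)
      ≤ ⨆ x : X, ⨆ y : X, ⨆ _ : x ≠ y,
          ENNReal.ofReal (Ψ (x, y)) *
            (ENNReal.ofReal (dist (f x) (f y)) / ENNReal.ofReal (dist x y)) :=
  blochNumber_le_lipschitzNumber_general f ω ω' Ψ hΨdiag hΨliminf
end

section
/- For all real numbers s, t with −1 < s < t < 1: artanh(t) − artanh(s) ≤ (t − s) / ( √(1 − t²) · √(1 − s²) ). -/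
open Filter Topology

/-- `log x ≤ (x-1)/√x` for `1 ≤ x`. -/
lemma log_le_sub_one_div_sqrt {x : ℝ} (hx : 1 ≤ x) :
    Real.log x ≤ (x - 1) / Real.sqrt x := by
  have hx0 : 0 < x := by linarith
  have hsx : 0 < Real.sqrt x := Real.sqrt_pos.mpr hx0
  have hu : 0 ≤ Real.log (Real.sqrt x) :=
    Real.log_nonneg (Real.one_le_sqrt.mpr hx)
  have hsinh := Real.self_le_sinh_iff.mpr hu
  have hexp : Real.exp (Real.log (Real.sqrt x)) = Real.sqrt x := Real.exp_log hsx
  have hsq : Real.sqrt x * Real.sqrt x = x := Real.mul_self_sqrt hx0.le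
  have hlog : Real.log (Real.sqrt x) = Real.log x / 2 := Real.log_sqrt hx0.le
  rw [Real.sinh_eq, hexp, Real.exp_neg, hexp, hlog] at hsinh
  have h2 : Real.log x ≤ Real.sqrt x - (Real.sqrt x)⁻¹ := by linarith
  have h3 : Real.sqrt x - (Real.sqrt x)⁻¹ = (x - 1) / Real.sqrt x := by
    rw [eq_div_iff hsx.ne', sub_mul, inv_mul_cancel₀ hsx.ne', hsq]
  exact h2.trans h3.le

lemma frac_aux (a b c d ts : ℝ) (hap : 0 < a) (hbp : 0 < b) (hcp : 0 < c) (hdp : 0 < d)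
    (hts : 0 < ts) (hkey : a * b + c * d ≤ 2) :
    ts / (a * b) + ts / (c * d) ≤ 2 * (ts / (d * b * (c * a))) := by
  have e : 2 * (ts / (d * b * (c * a))) = (2 * ts) / ((a * b) * (c * d)) := by
    ring
  rw [e, div_add_div _ _ (by positivity : (a*b) ≠ 0) (by positivity : (c*d) ≠ 0),
    div_le_div_iff₀ (by positivity) (by positivity)]
  have hN : ts * (c * d) + (a * b) * ts ≤ 2 * ts := by
    nlinarith [mul_nonneg hts.le (sub_nonneg.mpr hkey)]
  exact mul_le_mul_of_nonneg_right hN (by positivity)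

/-- The inverse hyperbolic tangent, `artanh t = (1/2) · log ((1+t)/(1-t))`. -/
noncomputable def artanh (t : ℝ) : ℝ := Real.log ((1 + t) / (1 - t)) / 2

/-- Jocić's inequality for `φ = artanh`:
`artanh t - artanh s ≤ (t - s) / (√(1-t²)·√(1-s²))` for `-1 < s < t < 1`. -/
theorem artanh_sub_artanh_le
    (s t : ℝ) (hs : -1 < s) (hst : s < t) (ht : t < 1) :
    artanh t - artanh s ≤ (t - s) / (Real.sqrt (1 - t ^ 2) * Real.sqrt (1 - s ^ 2)) := by
  have h1s : (0:ℝ) < 1 + s := by linarith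
  have h1t : (0:ℝ) < 1 + t := by linarith
  have h2t : (0:ℝ) < 1 - t := by linarith
  have h2s : (0:ℝ) < 1 - s := by linarith
  set a := Real.sqrt (1 + s) with ha
  set b := Real.sqrt (1 + t) with hb
  set c := Real.sqrt (1 - s) with hc
  set d := Real.sqrt (1 - t) with hd
  have hap : 0 < a := Real.sqrt_pos.mpr h1s
  have hbp : 0 < b := Real.sqrt_pos.mpr h1t
  have hcp : 0 < c := Real.sqrt_pos.mpr h2s
  have hdp : 0 < d := Real.sqrt_pos.mpr h2t
  have ha2 : a * a = 1 + s := Real.mul_self_sqrt h1s.le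
  have hb2 : b * b = 1 + t := Real.mul_self_sqrt h1t.le
  have hc2 : c * c = 1 - s := Real.mul_self_sqrt h2s.le
  have hd2 : d * d = 1 - t := Real.mul_self_sqrt h2t.le
  have hsq_t : Real.sqrt (1 - t ^ 2) = d * b := by
    rw [show (1 : ℝ) - t ^ 2 = (1 - t) * (1 + t) by ring, Real.sqrt_mul h2t.le]
  have hsq_s : Real.sqrt (1 - s ^ 2) = c * a := by
    rw [show (1 : ℝ) - s ^ 2 = (1 - s) * (1 + s) by ring, Real.sqrt_mul h2s.le]
  have hu1 : (1:ℝ) ≤ (1 + t) / (1 + s) := (one_le_div h1s).mpr (by linarith)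
  have hv1 : (1:ℝ) ≤ (1 - s) / (1 - t) := (one_le_div h2t).mpr (by linarith)
  have hdiff : artanh t - artanh s =
      (Real.log ((1 + t) / (1 + s)) + Real.log ((1 - s) / (1 - t))) / 2 := by
    unfold artanh
    rw [Real.log_div h1t.ne' h2t.ne', Real.log_div h1s.ne' h2s.ne',
      Real.log_div h1t.ne' h1s.ne', Real.log_div h2s.ne' h2t.ne']
    ring
  have hsu : Real.sqrt ((1 + t) / (1 + s)) = b / a := by
    rw [Real.sqrt_div h1t.le]
  have hsv : Real.sqrt ((1 - s) / (1 - t)) = c / d := by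
    rw [Real.sqrt_div h2s.le]
  clear_value a b c d
  have hlu : Real.log ((1 + t) / (1 + s)) ≤ (t - s) / (a * b) := by
    have h := log_le_sub_one_div_sqrt hu1
    rw [hsu] at h
    refine h.trans_eq ?_
    have e1 : (1 + t) / (1 + s) - 1 = (t - s) / (a * a) := by
      rw [ha2]; field_simp; ring
    rw [e1]
    field_simp
  have hlv : Real.log ((1 - s) / (1 - t)) ≤ (t - s) / (c * d) := by
    have h := log_le_sub_one_div_sqrt hv1
    rw [hsv] at h
    refine h.trans_eq ?_
    have e1 : (1 - s) / (1 - t) - 1 = (t - s) / (d * d) := by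
      rw [hd2]; field_simp; ring
    rw [e1]
    field_simp
  have hkey : a * b + c * d ≤ 2 := by
    nlinarith [sq_nonneg (a - b), sq_nonneg (c - d)]
  have hts : 0 < t - s := by linarith
  rw [hdiff, hsq_t, hsq_s]
  have key2 := frac_aux a b c d (t - s) hap hbp hcp hdp hts hkey
  linarith [hlu, hlv, key2]
end
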